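/- Let u, v ∈ K³ be row vectors such that ∑_{i,j} u_i·(Φ₃)_{ij}·c(u_j) = ∑_{i,j} v_i·(Φ₃)_{ij}·c(v_j), and assume this common value is nonzero. Let A and B be the 3×3 matrices A_{ij} = c(u_i)·u_j and B_{ij} = c(v_i)·v_j (i.e. A = u†u and B = v†v). Then there exists a 3×3 matrix g over K with g·Φ₃·g† = Φ₃ and g·A·g† = B. (Rank-one Hermitian matrices u†u whose vectors have the same nonzero value of the Hermitian form attached to Φ₃ lie in a single U(Φ₃)-orbit under conjugation; this is the orbit claim of Section 5.2.) -/
import Mathlib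


open Matrix

/-- The conjugate transpose `g† = (g.map c)ᵀ` of a matrix over `K`, with respect to the
involution `c` of `K`. -/
def dagger {K : Type*} [Field K] {n : ℕ} (c : K ≃+* K)
    (A : Matrix (Fin n) (Fin n) K) : Matrix (Fin n) (Fin n) K :=
  (A.map c)ᵀ

/-- The matrix `Φ₃` whose `(1,3)`, `(2,2)`, `(3,1)` entries equal `-1` and whose other
entries are `0`. -/
def Phi3 (K : Type*) [Field K] : Matrix (Fin 3) (Fin 3) K :=
  !![0, 0, -1; 0, -1, 0; -1, 0, 0]

lemma dagger_mul {K : Type*} [Field K] {n : ℕ} (c : K ≃+* K)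
    (A B : Matrix (Fin n) (Fin n) K) : dagger c (A * B) = dagger c B * dagger c A := by
  simp only [dagger]
  rw [show (A * B).map ⇑c = A.map ⇑c * B.map ⇑c from Matrix.map_mul (f := (c : K →+* K))]
  rw [Matrix.transpose_mul]

lemma dagger_one {K : Type*} [Field K] {n : ℕ} (c : K ≃+* K) :
    dagger c (1 : Matrix (Fin n) (Fin n) K) = 1 := by
  ext i j
  simp only [dagger, Matrix.transpose_apply, Matrix.map_apply, Matrix.one_apply]
  by_cases h : j = i
  · simp [h]
  · rw [if_neg h, if_neg (fun hh => h hh.symm), map_zero]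

lemma dagger_sub {K : Type*} [Field K] {n : ℕ} (c : K ≃+* K)
    (A B : Matrix (Fin n) (Fin n) K) : dagger c (A - B) = dagger c A - dagger c B := by
  ext i j; simp [dagger, Matrix.map_apply]

lemma dagger_smul {K : Type*} [Field K] {n : ℕ} (c : K ≃+* K) (x : K)
    (A : Matrix (Fin n) (Fin n) K) : dagger c (x • A) = c x • dagger c A := by
  ext i j; simp [dagger, Matrix.map_apply, smul_eq_mul]

/-- `K` is a field of characteristic zero with a ring automorphism `c` satisfying `c ∘ c = id`
and `c ≠ id`.  Let `u, v ∈ K³` be row vectors with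
`∑ u i (Φ₃) i j c (u j) = ∑ v i (Φ₃) i j c (v j) ≠ 0`, and let `A = u† u`, `B = v† v`,
i.e. `A i j = c (u i) · u j` and `B i j = c (v i) · v j`.  Then there exists `g` with
`g Φ₃ g† = Φ₃` and `g A g† = B`: such rank-one Hermitian matrices lie in a single
`U(Φ₃)`-orbit under conjugation. -/
theorem rank_one_same_norm_single_orbit
    {K : Type*} [Field K] [CharZero K] (c : K ≃+* K)
    (hcc : ∀ x, c (c x) = x) (hne : (c : K → K) ≠ id)
    (u v : Fin 3 → K)
    (huv : ∑ i, ∑ j, u i * Phi3 K i j * c (u j) = ∑ i, ∑ j, v i * Phi3 K i j * c (v j))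
    (hne0 : ∑ i, ∑ j, u i * Phi3 K i j * c (u j) ≠ 0)
    (A B : Matrix (Fin 3) (Fin 3) K)
    (hA : ∀ i j, A i j = c (u i) * u j) (hB : ∀ i j, B i j = c (v i) * v j) :
    ∃ g : Matrix (Fin 3) (Fin 3) K,
      g * Phi3 K * dagger c g = Phi3 K ∧ g * A * dagger c g = B := by
  -- Reduce to finding a unitary `g` sending the column `c ∘ u` to `c ∘ v`.
  suffices h : ∃ g : Matrix (Fin 3) (Fin 3) K,
      g * Phi3 K * dagger c g = Phi3 K ∧ ∀ i, (∑ k, g i k * c (u k)) = c (v i) by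
    obtain ⟨g, h1, h2⟩ := h
    refine ⟨g, h1, ?_⟩
    have h2' : ∀ j, (∑ l, c (g j l) * u l) = v j := by
      intro j
      have := congrArg c (h2 j)
      simpa only [map_sum, _root_.map_mul, hcc] using this
    ext i j
    have e1 := h2 i
    have e2 := h2' j
    simp only [Fin.sum_univ_three] at e1 e2
    simp only [Matrix.mul_apply, dagger, Matrix.transpose_apply, Matrix.map_apply, hA, hB,
      Fin.sum_univ_three]
    linear_combination (u 0 * c (g j 0) + u 1 * c (g j 1) + u 2 * c (g j 2)) * e1
      + c (v i) * e2
  -- expand the Hermitian-form sums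
  have expand : ∀ x y : Fin 3 → K, (∑ i, ∑ j, x i * Phi3 K i j * c (y j))
      = -(x 0 * c (y 2)) - x 1 * c (y 1) - x 2 * c (y 0) := by
    intro x y
    simp [Fin.sum_univ_three, Phi3, Matrix.vecHead, Matrix.vecTail]
    ring
  rw [expand, expand] at huv
  rw [expand] at hne0
  -- a norm-one scalar `lam` with `lam * ⟨v,u⟩ ≠ ⟨u,u⟩`
  obtain ⟨t, ht⟩ : ∃ t, c t ≠ t := by
    by_contra hcon
    push_neg at hcon
    exact hne (funext hcon)
  obtain ⟨lam, hlam, hlamE⟩ : ∃ l : K, l * c l = 1 ∧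
      l * (-(v 0 * c (u 2)) - v 1 * c (u 1) - v 2 * c (u 0))
        ≠ -(u 0 * c (u 2)) - u 1 * c (u 1) - u 2 * c (u 0) := by
    by_cases hE : (-(v 0 * c (u 2)) - v 1 * c (u 1) - v 2 * c (u 0))
        = -(u 0 * c (u 2)) - u 1 * c (u 1) - u 2 * c (u 0)
    · have ht0 : t ≠ 0 := by
        intro h; apply ht; rw [h, map_zero]
      have hct0 : c t ≠ 0 := by
        intro h; apply ht0; rw [← hcc t, h, map_zero]
      refine ⟨t / c t, ?_, ?_⟩
      · rw [map_div₀, hcc]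
        field_simp
      · rw [hE]
        intro hcon
        apply ht
        have h1 : t / c t = 1 := by
          have := mul_right_cancel₀ hne0 (hcon.trans (one_mul _).symm)
          exact this
        field_simp at h1
        exact h1.symm
    · exact ⟨1, by rw [_root_.map_one, mul_one], by rwa [one_mul]⟩
  have hane : (-(u 0 * c (u 2)) - u 1 * c (u 1) - u 2 * c (u 0))
      - lam * (-(v 0 * c (u 2)) - v 1 * c (u 1) - v 2 * c (u 0)) ≠ 0 :=
    sub_ne_zero_of_ne (Ne.symm hlamE)
  obtain ⟨a, hainv⟩ : ∃ a : K, a * ((-(u 0 * c (u 2)) - u 1 * c (u 1) - u 2 * c (u 0))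
      - lam * (-(v 0 * c (u 2)) - v 1 * c (u 1) - v 2 * c (u 0))) = 1 :=
    ⟨_, inv_mul_cancel₀ hane⟩
  -- the conjugate inverse relation
  have hcD : c (-(u 0 * c (u 2)) - u 1 * c (u 1) - u 2 * c (u 0))
      = -(u 0 * c (u 2)) - u 1 * c (u 1) - u 2 * c (u 0) := by
    simp only [map_sub, map_neg, _root_.map_mul, hcc]
    ring
  have hcE : c (-(v 0 * c (u 2)) - v 1 * c (u 1) - v 2 * c (u 0))
      = -(u 0 * c (v 2)) - u 1 * c (v 1) - u 2 * c (v 0) := by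
    simp only [map_sub, map_neg, _root_.map_mul, hcc]
    ring
  have hcainv : c a * ((-(v 0 * c (v 2)) - v 1 * c (v 1) - v 2 * c (v 0))
      - c lam * (-(u 0 * c (v 2)) - u 1 * c (v 1) - u 2 * c (v 0))) = 1 := by
    have h1 := congrArg c hainv
    rw [_root_.map_mul, _root_.map_one, map_sub, _root_.map_mul, hcD, hcE, huv] at h1
    exact h1
  -- the rank-one matrix P and the vector identities
  set P : Matrix (Fin 3) (Fin 3) K :=
    Matrix.of (fun i j => (lam * c (u i) - c (v i)) * (c lam * u j - v j)) with hP
  have hPhiPhi : Phi3 K * Phi3 K = 1 := by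
    ext i j
    fin_cases i <;> fin_cases j <;>
      simp [Phi3, Matrix.mul_apply, Fin.sum_univ_three, Matrix.one_apply, Matrix.vecHead, Matrix.vecTail]
  have hPP : P * Phi3 K * P =
      (-((c lam * u 0 - v 0) * (lam * c (u 2) - c (v 2)))
        - (c lam * u 1 - v 1) * (lam * c (u 1) - c (v 1))
        - (c lam * u 2 - v 2) * (lam * c (u 0) - c (v 0))) • P := by
    ext i j
    simp [hP, Matrix.mul_apply, Phi3, Fin.sum_univ_three, Matrix.smul_apply, smul_eq_mul]
    ring
  have hkey : a + c a = a * c a *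
      (-((c lam * u 0 - v 0) * (lam * c (u 2) - c (v 2)))
        - (c lam * u 1 - v 1) * (lam * c (u 1) - c (v 1))
        - (c lam * u 2 - v 2) * (lam * c (u 0) - c (v 0))) := by
    have h1 : (-((c lam * u 0 - v 0) * (lam * c (u 2) - c (v 2)))
        - (c lam * u 1 - v 1) * (lam * c (u 1) - c (v 1))
        - (c lam * u 2 - v 2) * (lam * c (u 0) - c (v 0)))
        = ((-(u 0 * c (u 2)) - u 1 * c (u 1) - u 2 * c (u 0))
            - lam * (-(v 0 * c (u 2)) - v 1 * c (u 1) - v 2 * c (u 0)))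
          + ((-(v 0 * c (v 2)) - v 1 * c (v 1) - v 2 * c (v 0))
            - c lam * (-(u 0 * c (v 2)) - u 1 * c (v 1) - u 2 * c (v 0))) := by
      linear_combination (-(u 0 * c (u 2)) - u 1 * c (u 1) - u 2 * c (u 0)) * hlam
    rw [h1]
    linear_combination (-(c a)) * hainv - a * hcainv
  have hdP : dagger c P = P := by
    ext i j
    simp only [dagger, Matrix.transpose_apply, Matrix.map_apply, hP, Matrix.of_apply,
      map_sub, _root_.map_mul, hcc]
    ring
  have hdPhi : dagger c (Phi3 K) = Phi3 K := by
    ext i j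
    fin_cases i <;> fin_cases j <;> simp [dagger, Phi3, Matrix.vecHead, Matrix.vecTail]
  refine ⟨lam • (1 - a • (P * Phi3 K)), ?_, ?_⟩
  · -- unitarity
    rw [dagger_smul, dagger_sub, dagger_one, dagger_smul, dagger_mul, hdP, hdPhi]
    rw [Matrix.smul_mul, Matrix.smul_mul, Matrix.mul_smul, smul_smul, hlam, one_smul]
    have h2 : (1 - a • (P * Phi3 K)) * Phi3 K = Phi3 K - a • P := by
      rw [sub_mul, one_mul, Matrix.smul_mul, mul_assoc, hPhiPhi, mul_one]
    rw [h2, mul_sub, mul_one, Matrix.mul_smul, sub_mul, ← mul_assoc, hPhiPhi, one_mul,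
      Matrix.smul_mul, ← mul_assoc, hPP, smul_smul, smul_sub, smul_smul]
    have h3 : c a * (a * (-((c lam * u 0 - v 0) * (lam * c (u 2) - c (v 2)))
        - (c lam * u 1 - v 1) * (lam * c (u 1) - c (v 1))
        - (c lam * u 2 - v 2) * (lam * c (u 0) - c (v 0)))) = a + c a := by
      linear_combination -hkey
    rw [h3, add_smul]
    abel
  · -- g sends c∘u to c∘v
    intro i
    fin_cases i <;>
      simp [Matrix.smul_apply, Matrix.sub_apply, Matrix.one_apply, Matrix.mul_apply,
        hP, Phi3, Fin.sum_univ_three, smul_eq_mul]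
    · linear_combination (-(lam * c (u 0) - c (v 0)) * a
          * (-(u 0 * c (u 2)) - u 1 * c (u 1) - u 2 * c (u 0))) * hlam
        + (-(lam * c (u 0) - c (v 0))) * hainv
    · linear_combination (-(lam * c (u 1) - c (v 1)) * a
          * (-(u 0 * c (u 2)) - u 1 * c (u 1) - u 2 * c (u 0))) * hlam
        + (-(lam * c (u 1) - c (v 1))) * hainv
    · linear_combination (-(lam * c (u 2) - c (v 2)) * a
          * (-(u 0 * c (u 2)) - u 1 * c (u 1) - u 2 * c (u 0))) * hlam
        + (-(lam * c (u 2) - c (v 2))) * hainv
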